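/- For every x ∈ X, the commutator of O^x_{YD_x} (acting on the query register Y and the x-coordinate of the database register D) with 1_Y ⊗ Π^∅_D satisfies ‖[O^x_{YD_x}, 1_Y ⊗ Π^∅_D]‖ ≤ 2·2^{−n/2}·√(2·Γ_x), as operators on ℂ^{Y×D̄}. -/

import Mathlib

open scoped Matrix Kronecker

noncomputable section

/-- The ℓ²→ℓ² operator norm of a square complex matrix. -/
def opNorm {I : Type*} [Fintype I] [DecidableEq I] (A : Matrix I I ℂ) : ℝ :=
  ‖Matrix.toEuclideanCLM (𝕜 := ℂ) A‖

/-- The commutator [A,B] = AB - BA. -/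
def commM {I : Type*} [Fintype I] (A B : Matrix I I ℂ) : Matrix I I ℂ := A * B - B * A

/-- Euclidean norm of a vector in ℂ^I. -/
def vnorm {I : Type*} [Fintype I] (v : I → ℂ) : ℝ := Real.sqrt (∑ i, ‖v i‖ ^ 2)

/-- Y = {0,1}^n. -/
abbrev Yb (n : ℕ) := Fin n → Bool
/-- Ȳ = Y ∪ {⊥}. -/
abbrev Ybar (n : ℕ) := Option (Yb n)

/-- standard basis vector |a⟩. -/
def ket {n : ℕ} (a : Ybar n) : Ybar n → ℂ := fun b => if b = a then 1 else 0

/-- (-1)^{η⋅y}. -/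
def signDot {n : ℕ} (η y : Yb n) : ℂ := (-1 : ℂ) ^ (Finset.univ.filter fun i => η i && y i).card

/-- 2^{-n/2}. -/
def cst (n : ℕ) : ℝ := (2 : ℝ) ^ (-(n : ℝ) / 2)

/-- |φ_η⟩ = 2^{-n/2} ∑_y (-1)^{η⋅y} |y⟩. -/
def phi {n : ℕ} (η : Yb n) : Ybar n → ℂ :=
  fun a => Option.casesOn a 0 fun y => (cst n : ℂ) * signDot η y

/-- |φ_0⟩. -/
def phi0 (n : ℕ) : Ybar n → ℂ := phi fun _ => false

/-- The Walsh–Hadamard transform on ℂ^Y, extended by the identity on |⊥⟩. -/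
def Hbar (n : ℕ) : Matrix (Ybar n) (Ybar n) ℂ :=
  Matrix.of fun a b =>
    match a, b with
    | none, none => 1
    | some y, some y' => (cst n : ℂ) * signDot y y'
    | _, _ => 0

/-- The involution exchanging ⊥ and 0^n. -/
def swapBot (n : ℕ) : Ybar n → Ybar n :=
  fun a =>
    Option.casesOn a (some fun _ => false) fun y =>
      if y = (fun _ => false) then none else some y

/-- The permutation matrix exchanging |⊥⟩ and |0^n⟩. -/
def Sswap (n : ℕ) : Matrix (Ybar n) (Ybar n) ℂ :=
  Matrix.of fun a b => if a = swapBot n b then 1 else 0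

/-- F = H̄ ⬝ S ⬝ H̄. -/
def Fmat (n : ℕ) : Matrix (Ybar n) (Ybar n) ℂ := Hbar n * Sswap n * Hbar n

/-- Γ_x = |{y : (x,y) ∈ R}|. -/
def Gam {n : ℕ} {X : Type*} [Fintype X] (R : X → Yb n → Prop) [∀ x, DecidablePred (R x)]
    (x : X) : ℕ :=
  (Finset.univ.filter fun y => R x y).card

/-- Γ_R = max_x Γ_x. -/
def GamR {n : ℕ} {X : Type*} [Fintype X] (R : X → Yb n → Prop) [∀ x, DecidablePred (R x)] : ℕ :=
  Finset.univ.sup fun x => Gam R x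

/-- whether an entry a ∈ Ȳ satisfies the relation at x (⊥ never does). -/
def hitB {n : ℕ} {X : Type*} (R : X → Yb n → Prop) [∀ x, DecidablePred (R x)] (x : X) :
    Ybar n → Bool :=
  fun a => Option.casesOn a false fun y => decide (R x y)

/-- The projection Π^x = ∑_{y : (x,y)∈R} |y⟩⟨y| on ℂ^Ȳ. -/
def Pix {n : ℕ} {X : Type*} (R : X → Yb n → Prop) [∀ x, DecidablePred (R x)] (x : X) :
    Matrix (Ybar n) (Ybar n) ℂ :=
  Matrix.diagonal fun a => if hitB R x a then 1 else 0

/-- bitwise xor. -/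
def xorY {n : ℕ} (y y' : Yb n) : Yb n := fun i => xor (y i) (y' i)

/-- CNOT on Y × Ȳ (control Ȳ, target Y), acting trivially on |y⟩⊗|⊥⟩. -/
def cnotFun (n : ℕ) : Yb n × Ybar n → Yb n × Ybar n :=
  fun p => Option.casesOn p.2 p fun y' => (xorY p.1 y', p.2)

def CNOTmat (n : ℕ) : Matrix (Yb n × Ybar n) (Yb n × Ybar n) ℂ :=
  Matrix.of fun a b => if a = cnotFun n b then 1 else 0

/-- O^x = (1⊗F)·CNOT·(1⊗F) on ℂ^{Y×Ȳ}. -/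
def Oxsmall (n : ℕ) : Matrix (Yb n × Ybar n) (Yb n × Ybar n) ℂ :=
  ((1 : Matrix (Yb n) (Yb n) ℂ) ⊗ₖ Fmat n) * CNOTmat n *
    ((1 : Matrix (Yb n) (Yb n) ℂ) ⊗ₖ Fmat n)

/-- The database index set D̄ = X → Ȳ. -/
abbrev Db (n : ℕ) (X : Type*) := X → Ybar n

/-- An operator A on ℂ^Ȳ acting on the x-coordinate of ℂ^{D̄}. -/
def onCoord {n : ℕ} {X : Type*} [Fintype X] [DecidableEq X] (x : X)
    (A : Matrix (Ybar n) (Ybar n) ℂ) : Matrix (Db n X) (Db n X) ℂ :=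
  Matrix.of fun d d' => if ∀ x', x' ≠ x → d x' = d' x' then A (d x) (d' x) else 0

/-- Π^x_{D_x} : diagonal projection on ℂ^{D̄} onto databases with (x, d x) ∈ R. -/
def PiDx {n : ℕ} {X : Type*} [Fintype X] [DecidableEq X]
    (R : X → Yb n → Prop) [∀ x, DecidablePred (R x)] (x : X) :
    Matrix (Db n X) (Db n X) ℂ :=
  Matrix.diagonal fun d => if hitB R x (d x) then 1 else 0

/-- Π^∅_D : diagonal projection on ℂ^{D̄} onto databases hitting R nowhere. -/
def PiEmptyD {n : ℕ} {X : Type*} [Fintype X] [DecidableEq X]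
    (R : X → Yb n → Prop) [∀ x, DecidablePred (R x)] :
    Matrix (Db n X) (Db n X) ℂ :=
  Matrix.diagonal fun d => if ∀ x, hitB R x (d x) = false then 1 else 0

/-- CNOT_{YD_x}. -/
def cnotDFun {n : ℕ} {X : Type*} (x : X) : Yb n × Db n X → Yb n × Db n X :=
  fun p => Option.casesOn (p.2 x) p fun yx => (xorY p.1 yx, p.2)

def CNOTD {n : ℕ} {X : Type*} [Fintype X] [DecidableEq X] (x : X) :
    Matrix (Yb n × Db n X) (Yb n × Db n X) ℂ :=
  Matrix.of fun a b => if a = cnotDFun x b then 1 else 0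

/-- F_{D_x}. -/
def FDx (n : ℕ) {X : Type*} [Fintype X] [DecidableEq X] (x : X) :
    Matrix (Db n X) (Db n X) ℂ :=
  onCoord x (Fmat n)

/-- O^x_{YD_x} = F_{D_x}·CNOT_{YD_x}·F_{D_x} on ℂ^{Y×D̄}. -/
def OxD (n : ℕ) {X : Type*} [Fintype X] [DecidableEq X] (x : X) :
    Matrix (Yb n × Db n X) (Yb n × Db n X) ℂ :=
  ((1 : Matrix (Yb n) (Yb n) ℂ) ⊗ₖ FDx n x) * CNOTD x *
    ((1 : Matrix (Yb n) (Yb n) ℂ) ⊗ₖ FDx n x)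

/-- O_{XYD} = ∑_x |x⟩⟨x| ⊗ O^x_{YD_x} on ℂ^{X×Y×D̄}. -/
def OXYD (n : ℕ) (X : Type*) [Fintype X] [DecidableEq X] :
    Matrix (X × Yb n × Db n X) (X × Yb n × Db n X) ℂ :=
  Matrix.of fun p q =>
    if p.1 = q.1 then OxD n p.1 (p.2.1, p.2.2) (q.2.1, q.2.2) else 0

/-- The pointer set P = ZMod (|X|+1). -/
abbrev Ptr (X : Type*) [Fintype X] := ZMod (Fintype.card X + 1)

/-- Encoding of X into the nonzero elements of ZMod (|X|+1). -/
def encodeX {X : Type*} [Fintype X] (x : X) : Ptr X :=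
  (((Fintype.equivFin X x : ℕ) + 1 : ℕ) : Ptr X)

/-- ext(d): the smallest x ∈ X with (x, d x) ∈ R, encoded in ZMod (|X|+1); ∅ ↦ 0. -/
def extD {n : ℕ} {X : Type*} [Fintype X] [LinearOrder X] (R : X → Yb n → Prop)
    [∀ x, DecidablePred (R x)] (d : Db n X) : Ptr X :=
  if h : (Finset.univ.filter fun x => hitB R x (d x) = true).Nonempty then
    encodeX ((Finset.univ.filter fun x => hitB R x (d x) = true).min' h)
  else 0

/-- The purified measurement M_{DP} : |d⟩⊗|w⟩ ↦ |d⟩⊗|w + ext(d)⟩ on ℂ^{D̄×P}. -/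
def MDP {n : ℕ} {X : Type*} [Fintype X] [LinearOrder X] (R : X → Yb n → Prop)
    [∀ x, DecidablePred (R x)] :
    Matrix (Db n X × Ptr X) (Db n X × Ptr X) ℂ :=
  Matrix.of fun p q => if p = (q.1, q.2 + extD R q.1) then 1 else 0

/-- O^x_{YD_x} ⊗ 1_P on ℂ^{Y×D̄×P}. -/
def OxDP (n : ℕ) {X : Type*} [Fintype X] [DecidableEq X] (x : X) :
    Matrix (Yb n × Db n X × Ptr X) (Yb n × Db n X × Ptr X) ℂ :=
  Matrix.of fun p q =>
    if p.2.2 = q.2.2 then OxD n x (p.1, p.2.1) (q.1, q.2.1) else 0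

/-- 1_Y ⊗ M_{DP} on ℂ^{Y×D̄×P}. -/
def MYDP {n : ℕ} {X : Type*} [Fintype X] [LinearOrder X] (R : X → Yb n → Prop)
    [∀ x, DecidablePred (R x)] :
    Matrix (Yb n × Db n X × Ptr X) (Yb n × Db n X × Ptr X) ℂ :=
  Matrix.of fun p q =>
    if p.1 = q.1 then MDP R (p.2.1, p.2.2) (q.2.1, q.2.2) else 0

/-- O_{XYD} ⊗ 1_P on ℂ^{X×Y×D̄×P}. -/
def OXYDP (n : ℕ) (X : Type*) [Fintype X] [DecidableEq X] :
    Matrix (X × Yb n × Db n X × Ptr X) (X × Yb n × Db n X × Ptr X) ℂ :=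
  Matrix.of fun p q =>
    if p.2.2.2 = q.2.2.2 then
      OXYD n X (p.1, p.2.1, p.2.2.1) (q.1, q.2.1, q.2.2.1)
    else 0

/-- 1_{X×Y} ⊗ M_{DP} on ℂ^{X×Y×D̄×P}. -/
def MXYDP {n : ℕ} {X : Type*} [Fintype X] [LinearOrder X] (R : X → Yb n → Prop)
    [∀ x, DecidablePred (R x)] :
    Matrix (X × Yb n × Db n X × Ptr X) (X × Yb n × Db n X × Ptr X) ℂ :=
  Matrix.of fun p q =>
    if p.1 = q.1 ∧ p.2.1 = q.2.1 then
      MDP R (p.2.2.1, p.2.2.2) (q.2.2.1, q.2.2.2)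
    else 0








-- helper instance (Lean struggles to find this by search)
instance instDEq4 (n : ℕ) (X : Type*) [Fintype X] [DecidableEq X] :
    DecidableEq (X × Yb n × Db n X × Ptr X) :=
  instDecidableEqProd


-- extensions to the five-register space W × X × Y × D̄ × P
/-- 1_W ⊗ O_{XYD} ⊗ 1_P on ℂ^{W×X×Y×D̄×P}. -/
def OW (n : ℕ) (W X : Type*) [Fintype X] [DecidableEq X] [DecidableEq W] :
    Matrix (W × X × Yb n × Db n X × Ptr X) (W × X × Yb n × Db n X × Ptr X) ℂ :=
  Matrix.of fun p q =>
    if p.1 = q.1 ∧ p.2.2.2.2 = q.2.2.2.2 then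
      OXYD n X (p.2.1, p.2.2.1, p.2.2.2.1) (q.2.1, q.2.2.1, q.2.2.2.1)
    else 0

/-- 1_{W×X×Y} ⊗ M_{DP} on ℂ^{W×X×Y×D̄×P}. -/
def MW {n : ℕ} (W : Type*) {X : Type*} [Fintype X] [LinearOrder X] [DecidableEq W]
    (R : X → Yb n → Prop) [∀ x, DecidablePred (R x)] :
    Matrix (W × X × Yb n × Db n X × Ptr X) (W × X × Yb n × Db n X × Ptr X) ℂ :=
  Matrix.of fun p q =>
    if p.1 = q.1 ∧ p.2.1 = q.2.1 ∧ p.2.2.1 = q.2.2.1 then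
      MDP R (p.2.2.2.1, p.2.2.2.2) (q.2.2.2.1, q.2.2.2.2)
    else 0

instance instDEq5 (n : ℕ) (W X : Type*) [Fintype X] [DecidableEq X] [DecidableEq W] :
    DecidableEq (W × X × Yb n × Db n X × Ptr X) :=
  instDecidableEqProd


/-- V ⊗ 1_{D̄×P} on ℂ^{W×X×Y×D̄×P}. -/
def Vext (n : ℕ) (W X : Type*) [Fintype X] [DecidableEq X]
    (V : Matrix (W × X × Yb n) (W × X × Yb n) ℂ) :
    Matrix (W × X × Yb n × Db n X × Ptr X) (W × X × Yb n × Db n X × Ptr X) ℂ :=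
  Matrix.of fun p q =>
    if p.2.2.2 = q.2.2.2 then V (p.1, p.2.1, p.2.2.1) (q.1, q.2.1, q.2.2.1) else 0

/-- Ψ = ψ ⊗ |⊥⃗⟩ ⊗ |0⟩. -/
def PsiInit (n : ℕ) {W X : Type*} [Fintype X] [DecidableEq X]
    (ψ : W × X × Yb n → ℂ) : W × X × Yb n × Db n X × Ptr X → ℂ :=
  fun p =>
    if p.2.2.2.1 = (fun _ => (none : Ybar n)) ∧ p.2.2.2.2 = (0 : Ptr X) then
      ψ (p.1, p.2.1, p.2.2.1)
    else 0

/-- 1_{W×X×Y×D̄} ⊗ |0⟩⟨0|_P. -/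
def ProjZeroP (n : ℕ) (W X : Type*) [Fintype X] [DecidableEq X] [DecidableEq W] :
    Matrix (W × X × Yb n × Db n X × Ptr X) (W × X × Yb n × Db n X × Ptr X) ℂ :=
  Matrix.of fun p q =>
    if p.1 = q.1 ∧ p.2.1 = q.2.1 ∧ p.2.2.1 = q.2.2.1 ∧ p.2.2.2.1 = q.2.2.2.1 ∧
        p.2.2.2.2 = (0 : Ptr X) ∧ q.2.2.2.2 = (0 : Ptr X) then 1 else 0



/-- O_{XYD} acting on registers 1, 2 and 5 of ℂ^{X×Y×X'×Y'×D̄}. -/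
def Oquery1 (n : ℕ) (X : Type*) [Fintype X] [DecidableEq X] :
    Matrix (X × Yb n × X × Yb n × Db n X) (X × Yb n × X × Yb n × Db n X) ℂ :=
  Matrix.of fun p q =>
    if p.2.2.1 = q.2.2.1 ∧ p.2.2.2.1 = q.2.2.2.1 then
      OXYD n X (p.1, p.2.1, p.2.2.2.2) (q.1, q.2.1, q.2.2.2.2)
    else 0

/-- O_{X'Y'D} acting on registers 3, 4 and 5 of ℂ^{X×Y×X'×Y'×D̄}. -/
def Oquery2 (n : ℕ) (X : Type*) [Fintype X] [DecidableEq X] :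
    Matrix (X × Yb n × X × Yb n × Db n X) (X × Yb n × X × Yb n × Db n X) ℂ :=
  Matrix.of fun p q =>
    if p.1 = q.1 ∧ p.2.1 = q.2.1 then
      OXYD n X (p.2.2.1, p.2.2.2.1, p.2.2.2.2) (q.2.2.1, q.2.2.2.1, q.2.2.2.2)
    else 0


/-- M^R_{DP} acting on registers D and P of ℂ^{D̄×P×P'}. -/
def Mext1 {n : ℕ} {X : Type*} [Fintype X] [LinearOrder X]
    (R : X → Yb n → Prop) [∀ x, DecidablePred (R x)] :
    Matrix (Db n X × Ptr X × Ptr X) (Db n X × Ptr X × Ptr X) ℂ :=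
  Matrix.of fun p q =>
    if p.2.2 = q.2.2 then MDP R (p.1, p.2.1) (q.1, q.2.1) else 0

/-- M^{R'}_{DP'} acting on registers D and P' of ℂ^{D̄×P×P'}. -/
def Mext2 {n : ℕ} {X : Type*} [Fintype X] [LinearOrder X]
    (R' : X → Yb n → Prop) [∀ x, DecidablePred (R' x)] :
    Matrix (Db n X × Ptr X × Ptr X) (Db n X × Ptr X × Ptr X) ℂ :=
  Matrix.of fun p q =>
    if p.2.1 = q.2.1 then MDP R' (p.1, p.2.2) (q.1, q.2.2) else 0




/-!
`F` is the reflection `1 - |v⟩⟨v|` in `v = |⊥⟩ - |φ₀⟩`, a vector with `‖v‖² = 2`. Split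
`Π^∅_D = (1 - Π^x_{D_x}) Π'`, where `Π'` only reads the coordinates other than `x`; then `Π'`
commutes with `O^x`, so the commutator is `-[O^x, Π^x_{D_x}] Π'`. Writing `O^x = U C U` with
`U = F_{D_x}` and `C` the CNOT, which commutes with `P = Π^x_{D_x}`, gives
`[UCU, P] = UC[U, P] + [U, P]CU`, hence a norm of at most `2 ‖[F, Π^x]‖`. Finally, with
`w = Π^x v` and `u = v - w`, `[F, Π^x] = |w⟩⟨u| - |u⟩⟨w|` with `u ⊥ w`; by Bessel's inequality its
norm is at most `‖u‖ ‖w‖ ≤ √2 · √Γ_x 2^{-n/2}`.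
-/

open scoped InnerProductSpace Matrix.Norms.L2Operator
open InnerProductSpace

section RankOne
variable {𝕜 E : Type*} [RCLike 𝕜] [NormedAddCommGroup E] [InnerProductSpace 𝕜 E]

theorem norm_inner_smul_sub_inner_smul_le {u w : E} (huw : ⟪u, w⟫_𝕜 = 0) (x : E) :
    ‖⟪u, x⟫_𝕜 • w - ⟪w, x⟫_𝕜 • u‖ ≤ ‖u‖ * ‖w‖ * ‖x‖ := by
  rcases eq_or_ne u 0 with rfl | hu
  · simp
  rcases eq_or_ne w 0 with rfl | hw
  · simp
  have hwu : ⟪w, u⟫_𝕜 = 0 := inner_eq_zero_symm.mp huw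
  have hON : Orthonormal 𝕜 ![(‖u‖⁻¹ : 𝕜) • u, (‖w‖⁻¹ : 𝕜) • w] := by
    rw [orthonormal_iff_ite]
    intro i j
    fin_cases i <;> fin_cases j <;>
      simp [inner_smul_left, inner_smul_right, huw, hwu, inner_self_eq_norm_sq_to_K, hu, hw]
  have hBessel := hON.sum_inner_products_le (s := Finset.univ) x
  simp only [Fin.sum_univ_two, Matrix.cons_val_zero, Matrix.cons_val_one, inner_smul_left,
    norm_mul, map_inv₀, RCLike.conj_ofReal, norm_inv, RCLike.norm_ofReal, abs_norm] at hBessel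
  have hPythagoras : ‖⟪u, x⟫_𝕜 • w - ⟪w, x⟫_𝕜 • u‖ ^ 2
      = ‖⟪u, x⟫_𝕜‖ ^ 2 * ‖w‖ ^ 2 + ‖⟪w, x⟫_𝕜‖ ^ 2 * ‖u‖ ^ 2 := by
    rw [@norm_sub_sq 𝕜, inner_smul_left, inner_smul_right, hwu]
    simp [norm_smul, mul_pow]
  have hu' : 0 < ‖u‖ := norm_pos_iff.mpr hu
  have hw' : 0 < ‖w‖ := norm_pos_iff.mpr hw
  field_simp at hBessel
  refine le_of_pow_le_pow_left₀ two_ne_zero (by positivity) ?_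
  rw [hPythagoras, mul_pow, mul_pow]
  linarith

variable [CompleteSpace E]

open ContinuousLinearMap in
theorem norm_commutator_one_sub_rankOne_le (v : E) {p : E →L[𝕜] E} (hp : IsStarProjection p) :
    ‖(1 - rankOne 𝕜 v v) * p - p * (1 - rankOne 𝕜 v v)‖ ≤ ‖v‖ * ‖p v‖ := by
  have hsymm : ∀ a b, ⟪p a, b⟫_𝕜 = ⟪a, p b⟫_𝕜 := hp.isSelfAdjoint.isSymmetric
  have horth : ⟪v - p v, p v⟫_𝕜 = 0 := by
    rw [← hsymm, map_sub, ← mul_apply_eq_comp, hp.isIdempotentElem.eq, sub_self, inner_zero_left]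
  have hsub : ‖v - p v‖ ≤ ‖v‖ := by
    have := norm_add_sq_eq_norm_sq_add_norm_sq_of_inner_eq_zero _ _ horth
    rw [sub_add_cancel] at this
    nlinarith [norm_nonneg (v - p v), norm_nonneg v, mul_self_nonneg ‖p v‖]
  refine opNorm_le_bound _ (by positivity) fun x => ?_
  calc _ = ‖⟪v - p v, x⟫_𝕜 • p v - ⟪p v, x⟫_𝕜 • (v - p v)‖ := by
        congr 1
        simp only [sub_apply, mul_apply_eq_comp, one_apply_eq_self, rankOne_apply, map_sub,
          map_smul, hsymm, inner_sub_left, sub_smul, smul_sub]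
        abel
    _ ≤ ‖v - p v‖ * ‖p v‖ * ‖x‖ := norm_inner_smul_sub_inner_smul_le horth x
    _ ≤ ‖v‖ * ‖p v‖ * ‖x‖ := by gcongr

open ContinuousLinearMap in
theorem one_sub_rankOne_mem_unitary {v : E} (hv : ‖v‖ ^ 2 = 2) :
    1 - rankOne 𝕜 v v ∈ unitary (E →L[𝕜] E) := by
  have hself : star (1 - rankOne 𝕜 v v) = 1 - rankOne 𝕜 v v := by
    rw [star_sub, star_one, star_eq_adjoint, adjoint_rankOne]
  have hsq : rankOne 𝕜 v v * rankOne 𝕜 v v = rankOne 𝕜 v v + rankOne 𝕜 v v := by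
    rw [mul_def, rankOne_comp_rankOne, inner_self_eq_norm_sq_to_K, ← RCLike.ofReal_pow, hv,
      RCLike.ofReal_ofNat, two_smul]
  have hinv : (1 - rankOne 𝕜 v v) * (1 - rankOne 𝕜 v v) = 1 := by
    rw [sub_mul, mul_sub, mul_sub, hsq, one_mul, mul_one, one_mul]
    abel
  exact Unitary.mem_iff.mpr ⟨by rw [hself, hinv], by rw [hself, hinv]⟩

end RankOne

namespace Matrix

theorem toEuclideanCLM_vecMulVec {𝕜 m : Type*} [RCLike 𝕜] [Fintype m] [DecidableEq m]
    (x y : m → 𝕜) :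
    toEuclideanCLM (n := m) (𝕜 := 𝕜) (vecMulVec x (star y)) =
      rankOne 𝕜 (WithLp.toLp 2 x) (WithLp.toLp 2 y) := by
  ext z i
  simp [mulVec, dotProduct, vecMulVec_apply, PiLp.inner_apply, Finset.mul_sum, mul_comm,
    mul_left_comm]

theorem isStarProjection_diagonal_ite {R I : Type*} [Semiring R] [StarRing R] [Fintype I]
    [DecidableEq I] (p : I → Prop) [DecidablePred p] :
    IsStarProjection (diagonal fun i => if p i then (1 : R) else 0) where
  isIdempotentElem := by
    rw [IsIdempotentElem, diagonal_mul_diagonal]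
    congr 1; ext i; by_cases h : p i <;> simp [h]
  isSelfAdjoint := by
    rw [IsSelfAdjoint, star_eq_conjTranspose, diagonal_conjTranspose]
    congr 1; ext i; by_cases h : p i <;> simp [h]

section Ampliation
variable {R I J K : Type*} [CommSemiring R] [StarRing R] [Fintype I] [DecidableEq I]
  [Fintype J] [DecidableEq J] [Fintype K] [DecidableEq K]

/-- `A ↦ A ⊗ 1_K`, read on `J` through `e`. -/
def ampliation (e : J ≃ I × K) : Matrix I I R →⋆ₐ[R] Matrix J J R where
  toFun A := (A ⊗ₖ (1 : Matrix K K R)).submatrix e e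
  map_one' := by rw [one_kronecker_one, submatrix_one_equiv]
  map_mul' A B := by rw [submatrix_mul_equiv, ← mul_kronecker_mul, mul_one]
  map_zero' := by simp
  map_add' A B := by ext; simp [add_mul]
  commutes' r := by
    simp only [Algebra.algebraMap_eq_smul_one, smul_kronecker, one_kronecker_one]
    exact congrArg (r • ·) (submatrix_one_equiv (α := R) e)
  map_star' A := by
    simp [star_eq_conjTranspose, conjTranspose_kronecker, conjTranspose_submatrix]

theorem ampliation_apply (e : J ≃ I × K) (A : Matrix I I R) (j j' : J) :
    ampliation e A j j' = if (e j).2 = (e j').2 then A (e j).1 (e j').1 else 0 := by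
  simp [ampliation, kroneckerMap_apply, one_apply]

theorem ampliation_diagonal (e : J ≃ I × K) (g : I → R) :
    ampliation e (diagonal g) = diagonal fun j => g (e j).1 := by
  ext j j'
  simp only [ampliation_apply, diagonal_apply, ← e.apply_eq_iff_eq, Prod.ext_iff]
  split_ifs <;> simp_all

theorem commute_ampliation_diagonal (e : J ≃ I × K) (A : Matrix I I R) {q : J → R}
    (hq : ∀ j j', (e j).2 = (e j').2 → q j = q j') :
    Commute (ampliation e A) (diagonal q) := by
  ext j j'
  rw [mul_diagonal, diagonal_mul, ampliation_apply]
  split_ifs with h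
  · rw [hq j j' h, mul_comm]
  · simp

theorem one_kronecker_eq_ampliation (A : Matrix I I R) :
    (1 : Matrix K K R) ⊗ₖ A = ampliation (Equiv.prodComm K I) A := by
  ext ⟨k, i⟩ ⟨k', i'⟩
  simp only [ampliation_apply, kroneckerMap_apply, one_apply, Equiv.prodComm_apply, Prod.swap]
  split_ifs <;> simp_all [mul_comm]

end Ampliation

end Matrix

section Commutator
variable {I : Type*} [Fintype I]

theorem commM_mul_mul_of_commute {U C V P : Matrix I I ℂ} (h : Commute C P) :
    commM (U * C * V) P = U * C * commM V P + commM U P * C * V := by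
  have : U * C * P * V = U * P * C * V := by rw [mul_assoc U C P, h.eq, ← mul_assoc]
  simp only [commM, mul_sub, sub_mul, ← mul_assoc, this]
  abel

variable [DecidableEq I]

theorem commM_one_sub_mul_of_commute {O P Q : Matrix I I ℂ} (h : Commute O Q) :
    commM O ((1 - P) * Q) = -(commM O P * Q) := by
  have : (1 - P) * Q * O = (1 - P) * O * Q := by rw [mul_assoc, ← h.eq, ← mul_assoc]
  simp only [commM, this]
  noncomm_ring

theorem norm_commM_conj_one_sub_mul_le {U C P Q : Matrix I I ℂ} (hU : ‖U‖ ≤ 1) (hC : ‖C‖ ≤ 1)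
    (hQ : ‖Q‖ ≤ 1) (hCP : Commute C P) (hQ_comm : Commute (U * C * U) Q) :
    ‖commM (U * C * U) ((1 - P) * Q)‖ ≤ 2 * ‖commM U P‖ := by
  rw [commM_one_sub_mul_of_commute hQ_comm, norm_neg, commM_mul_mul_of_commute hCP]
  calc _ ≤ (1 * 1 * ‖commM U P‖ + ‖commM U P‖ * 1 * 1) * 1 :=
        norm_mul_le_of_le (norm_add_le_of_le
          (norm_mul_le_of_le (norm_mul_le_of_le hU hC) le_rfl)
          (norm_mul_le_of_le (norm_mul_le_of_le le_rfl hC) hU)) hQ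
    _ = 2 * ‖commM U P‖ := by ring

end Commutator

section Hadamard
variable {n : ℕ}

theorem signDot_eq_prod (η y : Yb n) : signDot η y = ∏ i, if η i && y i then -1 else 1 := by
  rw [signDot, ← Finset.prod_const, Finset.prod_filter]

theorem signDot_comm (η y : Yb n) : signDot η y = signDot y η := by
  simp only [signDot_eq_prod, Bool.and_comm]

theorem star_signDot (η y : Yb n) : star (signDot η y) = signDot η y := by
  simp [signDot]

theorem signDot_zero_left (y : Yb n) : signDot (fun _ => false) y = 1 := by
  simp [signDot]

theorem sum_signDot_mul_signDot (y y' : Yb n) :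
    ∑ z, signDot y z * signDot y' z = if y = y' then 2 ^ n else 0 := by
  have hfactor : ∀ i, ∑ b : Bool, (if y i && b then (-1 : ℂ) else 1) *
      (if y' i && b then -1 else 1) = if y i = y' i then 2 else 0 := by
    intro i
    cases y i <;> cases y' i <;> norm_num [Fintype.sum_bool]
  simp_rw [signDot_eq_prod, ← Finset.prod_mul_distrib]
  rw [← Fintype.prod_sum (fun i b => (if y i && b then (-1 : ℂ) else 1) *
    (if y' i && b then -1 else 1))]
  simp_rw [hfactor]
  split_ifs with h
  · simp [h]
  · obtain ⟨i, hi⟩ := Function.ne_iff.mp h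
    exact Finset.prod_eq_zero (Finset.mem_univ i) (if_neg hi)

theorem cst_nonneg (n : ℕ) : 0 ≤ cst n := Real.rpow_nonneg zero_le_two _

theorem cst_sq_mul_two_pow (n : ℕ) : cst n ^ 2 * 2 ^ n = 1 := by
  rw [cst, ← Real.rpow_natCast, ← Real.rpow_natCast, ← Real.rpow_mul (by norm_num),
    ← Real.rpow_add (by norm_num)]
  norm_num

theorem Hbar_mul_Hbar (n : ℕ) : Hbar n * Hbar n = 1 := by
  ext (_ | y) (_ | y') <;>
    simp only [Matrix.mul_apply, Fintype.sum_option, Hbar, Matrix.of_apply, mul_zero, zero_mul,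
      zero_add, add_zero, Finset.sum_const_zero]
  case some.some =>
    have : ∑ z, (cst n : ℂ) * signDot y z * ((cst n : ℂ) * signDot z y')
        = (cst n : ℂ) ^ 2 * ∑ z, signDot y z * signDot y' z := by
      rw [Finset.mul_sum]
      exact Finset.sum_congr rfl fun z _ => by rw [signDot_comm z y']; ring
    rw [this, sum_signDot_mul_signDot]
    split_ifs with h
    · rw [h, Matrix.one_apply_eq]
      exact_mod_cast cst_sq_mul_two_pow n
    · simp [h]
  all_goals simp

theorem Hbar_conjTranspose (n : ℕ) : (Hbar n)ᴴ = Hbar n := by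
  ext (_ | y) (_ | y') <;> simp [Hbar, Matrix.conjTranspose_apply, star_signDot, signDot_comm]

end Hadamard

section Reflection
variable (n : ℕ)

def botSubZero : Ybar n → ℂ := ket none - ket (some fun _ => false)

def botSubPhi0 : Ybar n → ℂ := ket none - phi0 n

theorem Sswap_eq : Sswap n = 1 - Matrix.vecMulVec (botSubZero n) (star (botSubZero n)) := by
  ext a b
  simp only [Sswap, botSubZero, ket, swapBot, Matrix.of_apply, Matrix.sub_apply, Matrix.one_apply,
    Matrix.vecMulVec_apply, Pi.star_apply, Pi.sub_apply]
  rcases a with _ | y <;> rcases b with _ | y' <;> simp; all_goals split_ifs <;> simp_all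

theorem Hbar_mulVec_botSubZero : Hbar n *ᵥ botSubZero n = botSubPhi0 n := by
  ext (_ | y) <;> simp [Matrix.mulVec, dotProduct, Fintype.sum_option, Hbar, botSubZero,
    botSubPhi0, ket, phi0, phi, signDot_comm]

theorem Fmat_eq : Fmat n = 1 - Matrix.vecMulVec (botSubPhi0 n) (star (botSubPhi0 n)) := by
  rw [Fmat, Sswap_eq, Matrix.mul_sub, Matrix.sub_mul, Matrix.mul_one, Hbar_mul_Hbar,
    Matrix.mul_vecMulVec, Matrix.vecMulVec_mul, ← Hbar_conjTranspose, ← Matrix.star_mulVec,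
    Hbar_conjTranspose, Hbar_mulVec_botSubZero]

theorem toEuclideanCLM_Fmat : Matrix.toEuclideanCLM (𝕜 := ℂ) (Fmat n) =
    1 - rankOne ℂ (WithLp.toLp 2 (botSubPhi0 n)) (WithLp.toLp 2 (botSubPhi0 n)) := by
  rw [Fmat_eq, map_sub, map_one, Matrix.toEuclideanCLM_vecMulVec]

variable {n}

theorem botSubPhi0_none : botSubPhi0 n none = 1 := by simp [botSubPhi0, ket, phi0, phi]

theorem botSubPhi0_some (y : Yb n) : botSubPhi0 n (some y) = -cst n := by
  simp [botSubPhi0, ket, phi0, phi, signDot_zero_left]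

theorem norm_botSubPhi0_sq : ‖WithLp.toLp 2 (botSubPhi0 n)‖ ^ 2 = 2 := by
  rw [EuclideanSpace.norm_eq, Real.sq_sqrt (by positivity), Fintype.sum_option]
  simp only [botSubPhi0_none, botSubPhi0_some, norm_neg, Complex.norm_real,
    Real.norm_of_nonneg (cst_nonneg n), Finset.sum_const, Finset.card_univ, Fintype.card_fun,
    Fintype.card_bool, Fintype.card_fin, nsmul_eq_mul, norm_one, Nat.cast_pow, Nat.cast_ofNat]
  linarith [cst_sq_mul_two_pow n]

theorem norm_Fmat : ‖Fmat n‖ = 1 := by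
  have := one_sub_rankOne_mem_unitary (𝕜 := ℂ) (norm_botSubPhi0_sq (n := n))
  rw [← toEuclideanCLM_Fmat] at this
  rw [Matrix.cstar_norm_def]
  exact CStarRing.norm_of_mem_unitary this

variable {X : Type*} (R : X → Yb n → Prop) [∀ x, DecidablePred (R x)] (x : X)

theorem isStarProjection_Pix : IsStarProjection (Pix R x) :=
  Matrix.isStarProjection_diagonal_ite _

variable [Fintype X]

theorem norm_Pix_mulVec_botSubPhi0_sq :
    ‖WithLp.toLp 2 (Pix R x *ᵥ botSubPhi0 n)‖ ^ 2 = Gam R x * cst n ^ 2 := by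
  rw [EuclideanSpace.norm_eq, Real.sq_sqrt (by positivity), Fintype.sum_option]
  simp [Pix, Matrix.mulVec_diagonal, hitB, botSubPhi0_some, apply_ite, Finset.sum_ite, Gam,
    Real.norm_of_nonneg (cst_nonneg n)]

theorem opNorm_commM_Fmat_Pix_le :
    opNorm (commM (Fmat n) (Pix R x)) ≤ cst n * √(2 * Gam R x) := by
  have hv : ‖WithLp.toLp 2 (botSubPhi0 n)‖ = √2 := by
    rw [← norm_botSubPhi0_sq, Real.sqrt_sq (norm_nonneg _)]
  have hPv : ‖WithLp.toLp 2 (Pix R x *ᵥ botSubPhi0 n)‖ = √(Gam R x) * cst n := by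
    rw [← Real.sqrt_sq (norm_nonneg _), norm_Pix_mulVec_botSubPhi0_sq,
      Real.sqrt_mul (Nat.cast_nonneg _), Real.sqrt_sq (cst_nonneg n)]
  calc opNorm (commM (Fmat n) (Pix R x))
      ≤ ‖WithLp.toLp 2 (botSubPhi0 n)‖ * ‖WithLp.toLp 2 (Pix R x *ᵥ botSubPhi0 n)‖ := by
        rw [opNorm, commM, map_sub, map_mul, map_mul, toEuclideanCLM_Fmat,
          ← Matrix.toEuclideanCLM_toLp]
        exact norm_commutator_one_sub_rankOne_le _ ((isStarProjection_Pix R x).map _)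
    _ = cst n * √(2 * Gam R x) := by
        rw [hv, hPv, Real.sqrt_mul zero_le_two]; ring

end Reflection

section Database
variable {n : ℕ} {X : Type*} [Fintype X] [DecidableEq X]

theorem onCoord_eq_ampliation (x : X) (A : Matrix (Ybar n) (Ybar n) ℂ) :
    onCoord x A = Matrix.ampliation (Equiv.funSplitAt x (Ybar n)) A := by
  ext d d'
  simp only [onCoord, Matrix.of_apply, Matrix.ampliation_apply, Equiv.funSplitAt_apply, funext_iff,
    Subtype.forall]

omit [Fintype X] [DecidableEq X] in
theorem cnotDFun_involutive (x : X) : Function.Involutive (cnotDFun (n := n) x) := by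
  rintro ⟨y, d⟩
  cases hd : d x
  · simp [cnotDFun, hd]
  · ext i <;> simp [cnotDFun, hd, xorY]

theorem CNOTD_mem_unitary (x : X) :
    (CNOTD x : Matrix (Yb n × Db n X) (Yb n × Db n X) ℂ) ∈ unitary _ := by
  have hself : star (CNOTD x : Matrix (Yb n × Db n X) (Yb n × Db n X) ℂ) = CNOTD x := by
    ext p q
    have hswap : q = cnotDFun x p ↔ p = cnotDFun x q :=
      ⟨fun h => h ▸ (cnotDFun_involutive x p).symm, fun h => h ▸ (cnotDFun_involutive x q).symm⟩
    simp only [Matrix.star_apply, CNOTD, Matrix.of_apply, hswap]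
    split_ifs <;> simp
  have hinv : (CNOTD x : Matrix (Yb n × Db n X) (Yb n × Db n X) ℂ) * CNOTD x = 1 := by
    ext p q
    simp [Matrix.mul_apply, CNOTD, Matrix.one_apply, cnotDFun_involutive x q]
  exact Unitary.mem_iff.mpr ⟨by rw [hself, hinv], by rw [hself, hinv]⟩

theorem commute_CNOTD_one_kronecker_diagonal (x : X) (g : Db n X → ℂ) :
    Commute (CNOTD x) ((1 : Matrix (Yb n) (Yb n) ℂ) ⊗ₖ Matrix.diagonal g) := by
  rw [← Matrix.diagonal_one, Matrix.diagonal_kronecker_diagonal]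
  ext p q
  rw [Matrix.mul_diagonal, Matrix.diagonal_mul]
  simp only [CNOTD, Matrix.of_apply]
  split_ifs with h
  · rw [h]
    cases hq : q.2 x <;> simp [cnotDFun, hq]
  · simp

variable (R : X → Yb n → Prop) [∀ x, DecidablePred (R x)] (x : X)

theorem onCoord_Pix : onCoord x (Pix R x) = PiDx R x := by
  rw [onCoord_eq_ampliation, Pix, Matrix.ampliation_diagonal]
  rfl

def PiEmptyOffD : Matrix (Db n X) (Db n X) ℂ :=
  Matrix.diagonal fun d => if ∀ x', x' ≠ x → hitB R x' (d x') = false then 1 else 0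

theorem PiEmptyD_eq_mul : PiEmptyD R = (1 - PiDx R x) * PiEmptyOffD R x := by
  rw [PiEmptyD, PiDx, PiEmptyOffD, ← Matrix.diagonal_one, Matrix.diagonal_sub,
    Matrix.diagonal_mul_diagonal]
  congr 1
  ext d
  have hsplit : (∀ x', hitB R x' (d x') = false) ↔
      hitB R x (d x) = false ∧ ∀ x', x' ≠ x → hitB R x' (d x') = false :=
    ⟨fun h => ⟨h x, fun x' _ => h x'⟩, fun h x' => by
      by_cases hx' : x' = x
      · exact hx' ▸ h.1
      · exact h.2 x' hx'⟩
  simp only [hsplit]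
  cases hitB R x (d x) <;> simp

theorem commute_onCoord_PiEmptyOffD (A : Matrix (Ybar n) (Ybar n) ℂ) :
    Commute (onCoord x A) (PiEmptyOffD R x) := by
  rw [onCoord_eq_ampliation]
  refine Matrix.commute_ampliation_diagonal _ _ fun d d' h => ?_
  simp only [Equiv.funSplitAt_apply, funext_iff, Subtype.forall] at h
  simp +contextual [h]

end Database

section Lift
variable {n : ℕ} {X : Type*} [Fintype X] [DecidableEq X]

def liftYDx (x : X) :
    Matrix (Ybar n) (Ybar n) ℂ →⋆ₐ[ℂ] Matrix (Yb n × Db n X) (Yb n × Db n X) ℂ :=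
  (Matrix.ampliation (Equiv.prodComm _ _)).comp (Matrix.ampliation (Equiv.funSplitAt x _))

theorem liftYDx_apply (x : X) (A : Matrix (Ybar n) (Ybar n) ℂ) :
    liftYDx x A = 1 ⊗ₖ onCoord x A := by
  rw [onCoord_eq_ampliation, Matrix.one_kronecker_eq_ampliation]
  rfl

theorem OxD_eq (x : X) : OxD n x = liftYDx x (Fmat n) * CNOTD x * liftYDx x (Fmat n) := by
  rw [OxD, FDx, liftYDx_apply]

variable (R : X → Yb n → Prop) [∀ x, DecidablePred (R x)] (x : X)

theorem one_kronecker_PiEmptyD_eq : (1 : Matrix (Yb n) (Yb n) ℂ) ⊗ₖ PiEmptyD R =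
    (1 - liftYDx x (Pix R x)) * ((1 : Matrix (Yb n) (Yb n) ℂ) ⊗ₖ PiEmptyOffD R x) := by
  simp only [PiEmptyD_eq_mul R x, liftYDx_apply, onCoord_Pix, Matrix.one_kronecker_eq_ampliation,
    map_mul, map_sub, map_one]

theorem commute_CNOTD_liftYDx_Pix : Commute (CNOTD x) (liftYDx x (Pix R x)) := by
  rw [liftYDx_apply, onCoord_Pix]
  exact commute_CNOTD_one_kronecker_diagonal x _

theorem commute_OxD_one_kronecker_PiEmptyOffD :
    Commute (OxD n x) ((1 : Matrix (Yb n) (Yb n) ℂ) ⊗ₖ PiEmptyOffD R x) := by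
  have hF : Commute (liftYDx x (Fmat n)) ((1 : Matrix (Yb n) (Yb n) ℂ) ⊗ₖ PiEmptyOffD R x) := by
    rw [liftYDx_apply, Matrix.one_kronecker_eq_ampliation, Matrix.one_kronecker_eq_ampliation]
    exact (commute_onCoord_PiEmptyOffD R x _).map _
  rw [OxD_eq]
  exact (hF.mul_left (commute_CNOTD_one_kronecker_diagonal x _)).mul_left hF

theorem norm_one_kronecker_PiEmptyOffD_le :
    ‖(1 : Matrix (Yb n) (Yb n) ℂ) ⊗ₖ PiEmptyOffD R x‖ ≤ 1 := by
  rw [Matrix.one_kronecker_eq_ampliation]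
  exact ((Matrix.isStarProjection_diagonal_ite _).map _).norm_le

end Lift

theorem stmt9_general (n : ℕ) {X : Type*} [Fintype X] [DecidableEq X]
    (R : X → Yb n → Prop) [∀ x, DecidablePred (R x)] (x : X) :
    opNorm (commM (OxD n x) ((1 : Matrix (Yb n) (Yb n) ℂ) ⊗ₖ PiEmptyD R)) ≤
      2 * (2 : ℝ) ^ (-(n : ℝ) / 2) * Real.sqrt (2 * (Gam R x : ℝ)) := by
  have hU : ‖liftYDx x (Fmat n)‖ ≤ 1 :=
    (NonUnitalStarAlgHom.norm_apply_le _ _).trans norm_Fmat.le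
  have hC : ‖(CNOTD x : Matrix (Yb n × Db n X) (Yb n × Db n X) ℂ)‖ ≤ 1 :=
    (CStarRing.norm_of_mem_unitary (CNOTD_mem_unitary x)).le
  have hcomm := commute_OxD_one_kronecker_PiEmptyOffD R x
  rw [OxD_eq] at hcomm
  calc opNorm (commM (OxD n x) ((1 : Matrix (Yb n) (Yb n) ℂ) ⊗ₖ PiEmptyD R))
      ≤ 2 * ‖commM (liftYDx x (Fmat n)) (liftYDx x (Pix R x))‖ := by
        rw [one_kronecker_PiEmptyD_eq R x, OxD_eq]
        exact norm_commM_conj_one_sub_mul_le hU hC (norm_one_kronecker_PiEmptyOffD_le R x)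
          (commute_CNOTD_liftYDx_Pix R x) hcomm
    _ ≤ 2 * (cst n * √(2 * Gam R x)) := by
        rw [commM, ← map_mul, ← map_mul, ← map_sub]
        gcongr
        exact (NonUnitalStarAlgHom.norm_apply_le _ _).trans (opNorm_commM_Fmat_Pix_le R x)
    _ = 2 * (2 : ℝ) ^ (-(n : ℝ) / 2) * Real.sqrt (2 * (Gam R x : ℝ)) := by rw [cst, mul_assoc]

theorem stmt9 (n : ℕ) {X : Type*} [Fintype X] [DecidableEq X] [Nonempty X]
    (R : X → Yb n → Prop) [∀ x, DecidablePred (R x)] (x : X) :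
    opNorm (commM (OxD n x) ((1 : Matrix (Yb n) (Yb n) ℂ) ⊗ₖ PiEmptyD R)) ≤
      2 * (2 : ℝ) ^ (-(n : ℝ) / 2) * Real.sqrt (2 * (Gam R x : ℝ)) :=
  stmt9_general n R x

end
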